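/- For |q| < 1 and any z ∈ ℂ, we have (z;q)_∞ = Σ_{j≥0} (-1)^j q^{j(j-1)/2} z^j / (q;q)_j. -/

import Mathlib

/-! The series `S(z) = ∑ (-1)^j q^(j(j-1)/2) z^j / (q;q)_j` has coefficients obeying
`c_{j+1} (1 - q^(j+1)) = -q^j c_j`, so it converges everywhere by the ratio test and satisfies
Euler's functional equation `S(z) = (1 - z) S(qz)`. Iterating, `S(z) = (z;q)_n S(q^n z)`, and
`S(q^n z) → S(0) = 1` by dominated convergence, so the partial products `(z;q)_n` tend to `S(z)`. -/

noncomputable def qPoch (z q : ℂ) (n : ℕ) : ℂ := ∏ i ∈ Finset.range n, (1 - z * q ^ i)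

open Filter Topology

lemma qPoch_succ (z q : ℂ) (n : ℕ) : qPoch z q (n + 1) = qPoch z q n * (1 - z * q ^ n) :=
  Finset.prod_range_succ _ _

lemma one_sub_norm_le_norm_one_sub_mul_pow {q : ℂ} (hq : ‖q‖ ≤ 1) (i : ℕ) :
    1 - ‖q‖ ≤ ‖1 - q * q ^ i‖ :=
  calc 1 - ‖q‖ ≤ 1 - ‖q‖ ^ (i + 1) := by
        gcongr; exact pow_le_of_le_one (norm_nonneg q) hq (by omega)
    _ = ‖(1 : ℂ)‖ - ‖q * q ^ i‖ := by rw [norm_one, ← pow_succ', norm_pow]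
    _ ≤ ‖1 - q * q ^ i‖ := norm_sub_norm_le _ _

lemma one_sub_mul_pow_ne_zero {q : ℂ} (hq : ‖q‖ < 1) (i : ℕ) : 1 - q * q ^ i ≠ 0 :=
  norm_pos_iff.mp <| (sub_pos.mpr hq).trans_le (one_sub_norm_le_norm_one_sub_mul_pow hq.le i)

lemma qPoch_self_ne_zero {q : ℂ} (hq : ‖q‖ < 1) (n : ℕ) : qPoch q q n ≠ 0 :=
  Finset.prod_ne_zero_iff.mpr fun i _ ↦ one_sub_mul_pow_ne_zero hq i

lemma multipliable_one_sub_mul_pow {q : ℂ} (hq : ‖q‖ < 1) (z : ℂ) :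
    Multipliable fun l : ℕ ↦ 1 - z * q ^ l := by
  simp_rw [sub_eq_add_neg]
  apply multipliable_one_add_of_summable
  simpa [norm_mul, norm_pow] using (summable_geometric_of_lt_one (norm_nonneg q) hq).mul_left ‖z‖

noncomputable def eulerCoeff (q : ℂ) (j : ℕ) : ℂ :=
  (-1) ^ j * q ^ (j * (j - 1) / 2) / qPoch q q j

noncomputable def eulerSeries (q z : ℂ) : ℂ := ∑' j, eulerCoeff q j * z ^ j

lemma eulerCoeff_zero (q : ℂ) : eulerCoeff q 0 = 1 := by simp [eulerCoeff, qPoch]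

lemma eulerCoeff_succ_mul {q : ℂ} (hq : ‖q‖ < 1) (j : ℕ) :
    eulerCoeff q (j + 1) * (1 - q * q ^ j) = -(q ^ j * eulerCoeff q j) := by
  have := one_sub_mul_pow_ne_zero hq j
  have := qPoch_self_ne_zero hq j
  rw [eulerCoeff, eulerCoeff, Nat.triangle_succ, qPoch_succ]
  field_simp
  ring

lemma summable_norm_eulerCoeff_mul_pow {q : ℂ} (hq : ‖q‖ < 1) (z : ℂ) :
    Summable fun j ↦ ‖eulerCoeff q j * z ^ j‖ := by
  have hq' : 0 < 1 - ‖q‖ := sub_pos.mpr hq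
  have hsmall : ∀ᶠ j : ℕ in atTop, ‖q‖ ^ j * ‖z‖ ≤ (1 - ‖q‖) / 2 := by
    have := (tendsto_pow_atTop_nhds_zero_of_lt_one (norm_nonneg q) hq).mul_const ‖z‖
    rw [zero_mul] at this
    exact this.eventually_le_const (half_pos hq')
  refine summable_of_ratio_norm_eventually_le one_half_lt_one ?_
  filter_upwards [hsmall] with j hj
  have hstep : ‖eulerCoeff q (j + 1)‖ * (1 - ‖q‖) ≤ ‖q‖ ^ j * ‖eulerCoeff q j‖ := by
    calc ‖eulerCoeff q (j + 1)‖ * (1 - ‖q‖)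
        ≤ ‖eulerCoeff q (j + 1)‖ * ‖1 - q * q ^ j‖ := by
          gcongr; exact one_sub_norm_le_norm_one_sub_mul_pow hq.le j
      _ = ‖q‖ ^ j * ‖eulerCoeff q j‖ := by
          rw [← norm_mul, eulerCoeff_succ_mul hq, norm_neg, norm_mul, norm_pow]
  simp only [norm_norm]
  refine le_of_mul_le_mul_right ?_ hq'
  calc ‖eulerCoeff q (j + 1) * z ^ (j + 1)‖ * (1 - ‖q‖)
      = ‖eulerCoeff q (j + 1)‖ * (1 - ‖q‖) * (‖z‖ ^ j * ‖z‖) := by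
        rw [norm_mul, norm_pow, pow_succ]; ring
    _ ≤ ‖q‖ ^ j * ‖eulerCoeff q j‖ * (‖z‖ ^ j * ‖z‖) := by gcongr
    _ = ‖q‖ ^ j * ‖z‖ * ‖eulerCoeff q j * z ^ j‖ := by rw [norm_mul, norm_pow]; ring
    _ ≤ (1 - ‖q‖) / 2 * ‖eulerCoeff q j * z ^ j‖ := by gcongr
    _ = 1 / 2 * ‖eulerCoeff q j * z ^ j‖ * (1 - ‖q‖) := by ring

lemma eulerSeries_eq_one_sub_mul {q : ℂ} (hq : ‖q‖ < 1) (z : ℂ) :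
    eulerSeries q z = (1 - z) * eulerSeries q (q * z) := by
  have hs (w : ℂ) := (summable_norm_eulerCoeff_mul_pow hq w).of_norm
  have hdiff : eulerSeries q z - eulerSeries q (q * z) = -z * eulerSeries q (q * z) := by
    rw [eulerSeries, eulerSeries, ← (hs z).tsum_sub (hs (q * z)),
      ((hs z).sub (hs (q * z))).tsum_eq_zero_add, ← tsum_mul_left]
    simp only [pow_zero, sub_self, zero_add]
    refine tsum_congr fun j ↦ ?_
    linear_combination z ^ (j + 1) * eulerCoeff_succ_mul hq j
  linear_combination hdiff

lemma eulerSeries_eq_qPoch_mul {q : ℂ} (hq : ‖q‖ < 1) (z : ℂ) (n : ℕ) :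
    eulerSeries q z = qPoch z q n * eulerSeries q (q ^ n * z) := by
  induction n with
  | zero => simp [qPoch]
  | succ n ih =>
    rw [ih, eulerSeries_eq_one_sub_mul hq (q ^ n * z), qPoch_succ, ← mul_assoc q, ← pow_succ']
    ring

lemma eulerSeries_zero (q : ℂ) : eulerSeries q 0 = 1 := by
  rw [eulerSeries, tsum_eq_single 0 fun j hj ↦ by simp [hj], pow_zero, mul_one, eulerCoeff_zero]

lemma tendsto_eulerSeries_pow_mul {q : ℂ} (hq : ‖q‖ < 1) (z : ℂ) :
    Tendsto (fun n ↦ eulerSeries q (q ^ n * z)) atTop (𝓝 1) := by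
  have hpow : Tendsto (fun n ↦ q ^ n * z) atTop (𝓝 0) := by
    simpa using (tendsto_pow_atTop_nhds_zero_of_norm_lt_one hq).mul_const z
  rw [← eulerSeries_zero q]
  refine tendsto_tsum_of_dominated_convergence (summable_norm_eulerCoeff_mul_pow hq z)
    (fun j ↦ (hpow.pow j).const_mul _) (Eventually.of_forall fun n j ↦ ?_)
  rw [norm_mul, norm_mul, mul_pow, norm_mul, norm_pow, norm_pow, norm_pow]
  gcongr
  exact mul_le_of_le_one_left (by positivity)
    (pow_le_one₀ (by positivity) (pow_le_one₀ (norm_nonneg q) hq.le))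

lemma tendsto_qPoch_eulerSeries {q : ℂ} (hq : ‖q‖ < 1) (z : ℂ) :
    Tendsto (qPoch z q) atTop (𝓝 (eulerSeries q z)) := by
  have hlim := (tendsto_const_nhds (x := eulerSeries q z)).div
    (tendsto_eulerSeries_pow_mul hq z) one_ne_zero
  rw [div_one] at hlim
  refine hlim.congr' ?_
  filter_upwards [(tendsto_eulerSeries_pow_mul hq z).eventually_ne one_ne_zero] with n hn
  rw [Pi.div_apply, div_eq_iff hn, ← eulerSeries_eq_qPoch_mul hq]

theorem stmt3 (q z : ℂ) (hq : ‖q‖ < 1) :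
    (∏' l : ℕ, (1 - z * q ^ l)) =
      ∑' j : ℕ, (-1) ^ j * q ^ (j * (j - 1) / 2) * z ^ j / qPoch q q j := by
  have hprod := (multipliable_one_sub_mul_pow hq z).hasProd.tendsto_prod_nat
  rw [tendsto_nhds_unique hprod (tendsto_qPoch_eulerSeries hq z), eulerSeries]
  exact tsum_congr fun j ↦ by rw [eulerCoeff]; ring
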